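/- A linear code C = C_1 + u C_2 of length n over R = Z4[u]/(u^2), where C_1, C_2 are linear codes of length n over Z4, is cyclic (closed under the cyclic shift) if and only if both C_1 and C_2 are cyclic codes over Z4. -/
import Mathlib


open DualNumber TrivSqZeroExt

/-- The ring `R = ℤ₄[u]/(u²)`, realized as dual numbers over `ℤ₄`. -/
abbrev R4 := DualNumber (ZMod 4)

/-- The cyclic shift `τ(c₀, …, c_{n-1}) = (c_{n-1}, c₀, …, c_{n-2})`. -/
def shift {n : ℕ} [NeZero n] {α : Type*} (c : Fin n → α) : Fin n → α :=
  fun i => c (i - 1)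

/-- The code `C = C₁ + u C₂` of length `n` over `R = ℤ₄[u]/(u²)` determined by
two `ℤ₄`-linear codes `C₁, C₂` of length `n`. -/
def codeSum {n : ℕ} (C1 C2 : Submodule (ZMod 4) (Fin n → ZMod 4)) :
    Set (Fin n → R4) :=
  {x | ∃ c1 ∈ C1, ∃ c2 ∈ C2, x = fun i => inl (c1 i) + eps * inl (c2 i)}

lemma repr_inj {a b a' b' : ZMod 4}
    (h : (inl a + eps * inl b : R4) = inl a' + eps * inl b') : a = a' ∧ b = b' := by
  constructor
  · have := congrArg TrivSqZeroExt.fst h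
    simpa using this
  · have := congrArg TrivSqZeroExt.snd h
    simpa using this

/-- A linear code `C = C₁ + u C₂` of length `n` over `R = ℤ₄[u]/(u²)` is cyclic
(closed under the cyclic shift) iff both `C₁` and `C₂` are cyclic codes over `ℤ₄`. -/
theorem stmt11 (n : ℕ) [NeZero n] (C1 C2 : Submodule (ZMod 4) (Fin n → ZMod 4)) :
    (∀ c ∈ codeSum C1 C2, shift c ∈ codeSum C1 C2) ↔
      ((∀ c ∈ C1, shift c ∈ C1) ∧ (∀ c ∈ C2, shift c ∈ C2)) := by
  constructor
  · intro h
    constructor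
    · intro c hc
      obtain ⟨c1, h1, c2, h2, hx⟩ :=
        h (fun i => inl (c i) + eps * inl (0 : ZMod 4)) ⟨c, hc, 0, C2.zero_mem, rfl⟩
      have : ∀ i, shift c i = c1 i := fun i => (repr_inj (congrFun hx i)).1
      rwa [show shift c = c1 from funext this]
    · intro c hc
      obtain ⟨c1, h1, c2, h2, hx⟩ :=
        h (fun i => inl (0 : ZMod 4) + eps * inl (c i)) ⟨0, C1.zero_mem, c, hc, rfl⟩
      have : ∀ i, shift c i = c2 i := fun i => (repr_inj (congrFun hx i)).2
      rwa [show shift c = c2 from funext this]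
  · rintro ⟨h1, h2⟩ x ⟨c1, hc1, c2, hc2, rfl⟩
    exact ⟨shift c1, h1 c1 hc1, shift c2, h2 c2 hc2, rfl⟩
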